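/- arXiv:2405.19044 — 6 statements merged into one kernel-verified Lean document; each statement's English description precedes it below -/
import Mathlib

section
/- Let B ∈ ℝ^{p×q} and c ∈ ℝ^p such that the linear system Bx = c is consistent. Then for any matrix S ∈ ℝ^{p×ℓ} and any vector x̃ ∈ ℝ^q, B^⊤ S S^⊤ (B x̃ − c) ≠ 0 if and only if S^⊤ (B x̃ − c) ≠ 0. -/
open Matrix

/-- For a consistent system `Bx = c`, `Bᵀ S Sᵀ (B x̃ − c) ≠ 0 ↔ Sᵀ (B x̃ − c) ≠ 0`. -/
theorem mul_sketch_ne_zero_iff {p q ℓ : ℕ} (B : Matrix (Fin p) (Fin q) ℝ)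
    (c : Fin p → ℝ) (hcons : ∃ x : Fin q → ℝ, B.mulVec x = c)
    (S : Matrix (Fin p) (Fin ℓ) ℝ) (xt : Fin q → ℝ) :
    Bᵀ.mulVec (S.mulVec (Sᵀ.mulVec (B.mulVec xt - c))) ≠ 0 ↔
      Sᵀ.mulVec (B.mulVec xt - c) ≠ 0 := by
  obtain ⟨x₀, hx₀⟩ := hcons
  constructor
  · intro h hy
    apply h
    rw [hy, Matrix.mulVec_zero, Matrix.mulVec_zero]
  · intro hy h
    apply hy
    set r := B.mulVec xt - c with hr
    set y := Sᵀ.mulVec r with hyy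
    have hrB : r = B.mulVec (xt - x₀) := by
      rw [hr, Matrix.mulVec_sub, hx₀]
    have key : y ⬝ᵥ y = 0 := by
      calc y ⬝ᵥ y = r ⬝ᵥ S.mulVec y := by
            rw [hyy, Matrix.dotProduct_mulVec, Matrix.vecMul_transpose,
              dotProduct_comm]
        _ = (xt - x₀) ⬝ᵥ Bᵀ.mulVec (S.mulVec y) := by
            rw [hrB, dotProduct_comm, Matrix.dotProduct_mulVec,
              ← Matrix.mulVec_transpose, dotProduct_comm]
        _ = 0 := by rw [h, dotProduct_zero]
    exact (dotProduct_self_eq_zero).mp key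
end

section
/- The set of minimizers of the unconstrained stochastic optimization problem min Φ(x,z) coincides with the solution set of the constrained problem {(x,z) : g(z) = 0 and f(x,z) = 0}, where g(z) = E_T[½‖T^⊤A^⊤z‖²] and f(x,z) = E_S[½‖S^⊤(Ax−(b−z))‖²] and Φ = g + f, for any choice of the distributions of S and T. -/
open Matrix MeasureTheory

/-! Both `g` and `f` are expectations of squares, hence nonnegative, so `Φ = g + f ≥ 0`.
The orthogonal decomposition `b = A x₀ + z₀` with `z₀ ∈ (range A)ᗮ = ker Aᵀ` gives a common
zero `(x₀, z₀)` of `g` and `f`. Hence `min Φ = 0`, and `Φ(x, z) = 0` exactly when both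
nonnegative summands vanish. -/

theorem setOf_forall_add_le_eq_setOf_eq_zero_and_eq_zero {α : Type*} {g f : α → ℝ}
    (hg : ∀ p, 0 ≤ g p) (hf : ∀ p, 0 ≤ f p) (h : ∃ p, g p = 0 ∧ f p = 0) :
    {p | ∀ q, g p + f p ≤ g q + f q} = {p | g p = 0 ∧ f p = 0} := by
  obtain ⟨p₀, hg₀, hf₀⟩ := h
  ext p
  constructor
  · intro hp
    have hsum : g p + f p ≤ 0 := by simpa [hg₀, hf₀] using hp p₀
    constructor <;> linarith [hg p, hf p]
  · rintro ⟨hgp, hfp⟩ q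
    simpa [hgp, hfp] using add_nonneg (hg q) (hf q)

theorem Matrix.exists_mulVec_add_eq_of_conjTranspose_mulVec_eq_zero {𝕜 m n : Type*} [RCLike 𝕜]
    [Fintype m] [Fintype n] [DecidableEq m] [DecidableEq n] (A : Matrix m n 𝕜) (b : m → 𝕜) :
    ∃ x z, Aᴴ *ᵥ z = 0 ∧ A *ᵥ x + z = b := by
  obtain ⟨_, ⟨x, rfl⟩, z, hz, hb⟩ :=
    (LinearMap.range (toEuclideanLin A)).exists_add_mem_mem_orthogonal (WithLp.toLp 2 b)
  rw [LinearMap.orthogonal_range, ← toEuclideanLin_conjTranspose_eq_adjoint] at hz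
  exact ⟨x.ofLp, z.ofLp, congrArg WithLp.ofLp hz, (congrArg WithLp.ofLp hb).symm⟩

theorem integral_half_dotProduct_self_nonneg {Ω ι : Type*} [MeasurableSpace Ω] [Fintype ι]
    (μ : Measure Ω) (v : Ω → ι → ℝ) :
    0 ≤ ∫ ω, (1 : ℝ) / 2 * (v ω ⬝ᵥ v ω) ∂μ :=
  integral_nonneg fun ω =>
    mul_nonneg (by norm_num) (by simpa using dotProduct_self_star_nonneg (v ω))

theorem minimizers_eq_constrained_general {m n ℓ s : ℕ} (A : Matrix (Fin m) (Fin n) ℝ)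
    (b : Fin m → ℝ)
    {Ω₁ Ω₂ : Type*} [MeasurableSpace Ω₁] [MeasurableSpace Ω₂]
    (μ : Measure Ω₁)
    (ν : Measure Ω₂)
    (T : Ω₁ → Matrix (Fin n) (Fin s) ℝ) (S : Ω₂ → Matrix (Fin m) (Fin ℓ) ℝ)
    (g : (Fin m → ℝ) → ℝ) (f : (Fin n → ℝ) → (Fin m → ℝ) → ℝ)
    (hg : g = fun z => ∫ ω, (1 : ℝ)/2 *
      ((T ω)ᵀ.mulVec (Aᵀ.mulVec z) ⬝ᵥ (T ω)ᵀ.mulVec (Aᵀ.mulVec z)) ∂μ)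
    (hf : f = fun x z => ∫ ω, (1 : ℝ)/2 *
      ((S ω)ᵀ.mulVec (A.mulVec x - (b - z)) ⬝ᵥ (S ω)ᵀ.mulVec (A.mulVec x - (b - z))) ∂ν)
    (Φ : (Fin n → ℝ) → (Fin m → ℝ) → ℝ) (hΦ : Φ = fun x z => g z + f x z) :
    {p : (Fin n → ℝ) × (Fin m → ℝ) | ∀ q : (Fin n → ℝ) × (Fin m → ℝ), Φ p.1 p.2 ≤ Φ q.1 q.2}
      = {p : (Fin n → ℝ) × (Fin m → ℝ) | g p.2 = 0 ∧ f p.1 p.2 = 0} := by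
  subst hΦ
  obtain ⟨x₀, z₀, hz₀, hx₀⟩ := A.exists_mulVec_add_eq_of_conjTranspose_mulVec_eq_zero b
  rw [conjTranspose_eq_transpose_of_trivial] at hz₀
  refine setOf_forall_add_le_eq_setOf_eq_zero_and_eq_zero (g := fun p => g p.2)
    (f := fun p => f p.1 p.2) ?_ ?_ ⟨(x₀, z₀), ?_, ?_⟩
  · intro p; rw [hg]; exact integral_half_dotProduct_self_nonneg _ _
  · intro p; rw [hf]; exact integral_half_dotProduct_self_nonneg _ _
  · simp only [hg, hz₀, mulVec_zero, dotProduct_zero, mul_zero, integral_zero]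
  · have hres : A *ᵥ x₀ - (b - z₀) = 0 := by rw [← hx₀]; abel
    simp only [hf, hres, mulVec_zero, dotProduct_zero, mul_zero, integral_zero]

/-- The set of minimizers of `Φ = g + f` coincides with the solution set of the
constrained problem `g(z) = 0 ∧ f(x,z) = 0`, for any distributions of `S` and `T`. -/
theorem minimizers_eq_constrained {m n ℓ s : ℕ} (A : Matrix (Fin m) (Fin n) ℝ)
    (b : Fin m → ℝ)
    {Ω₁ Ω₂ : Type*} [MeasurableSpace Ω₁] [MeasurableSpace Ω₂]
    (μ : Measure Ω₁) [IsProbabilityMeasure μ]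
    (ν : Measure Ω₂) [IsProbabilityMeasure ν]
    (T : Ω₁ → Matrix (Fin n) (Fin s) ℝ) (S : Ω₂ → Matrix (Fin m) (Fin ℓ) ℝ)
    (g : (Fin m → ℝ) → ℝ) (f : (Fin n → ℝ) → (Fin m → ℝ) → ℝ)
    (hg : g = fun z => ∫ ω, (1 : ℝ)/2 *
      ((T ω)ᵀ.mulVec (Aᵀ.mulVec z) ⬝ᵥ (T ω)ᵀ.mulVec (Aᵀ.mulVec z)) ∂μ)
    (hf : f = fun x z => ∫ ω, (1 : ℝ)/2 *
      ((S ω)ᵀ.mulVec (A.mulVec x - (b - z)) ⬝ᵥ (S ω)ᵀ.mulVec (A.mulVec x - (b - z))) ∂ν)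
    (hgint : ∀ z, Integrable (fun ω => (1 : ℝ)/2 *
      ((T ω)ᵀ.mulVec (Aᵀ.mulVec z) ⬝ᵥ (T ω)ᵀ.mulVec (Aᵀ.mulVec z))) μ)
    (hfint : ∀ x z, Integrable (fun ω => (1 : ℝ)/2 *
      ((S ω)ᵀ.mulVec (A.mulVec x - (b - z)) ⬝ᵥ (S ω)ᵀ.mulVec (A.mulVec x - (b - z)))) ν)
    (Φ : (Fin n → ℝ) → (Fin m → ℝ) → ℝ) (hΦ : Φ = fun x z => g z + f x z) :
    {p : (Fin n → ℝ) × (Fin m → ℝ) | ∀ q : (Fin n → ℝ) × (Fin m → ℝ), Φ p.1 p.2 ≤ Φ q.1 q.2}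
      = {p : (Fin n → ℝ) × (Fin m → ℝ) | g p.2 = 0 ∧ f p.1 p.2 = 0} :=
  minimizers_eq_constrained_general A b μ ν T S g f hg hf Φ hΦ
end

section
/- Let M ∈ ℝ^{m×m} be symmetric positive semidefinite and A ∈ ℝ^{m×n}. If M is positive definite, then Null(A^⊤ M A) = Null(A). More generally, Null(A^⊤ M A) = Null(A) if and only if {x : Ax = b_{Range(A)}} = {x : M^{1/2}Ax = M^{1/2} b_{Range(A)}} for every b ∈ ℝ^m. -/
open Matrix

/-- The four Penrose conditions characterizing the Moore–Penrose pseudoinverse. -/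
def IsMoorePenrose {m n : ℕ} (A : Matrix (Fin m) (Fin n) ℝ)
    (B : Matrix (Fin n) (Fin m) ℝ) : Prop :=
  A * B * A = A ∧ B * A * B = B ∧ (A * B)ᵀ = A * B ∧ (B * A)ᵀ = B * A

/-- The square root of a positive semidefinite matrix (the definition of
`Matrix.PosSemidef.sqrt` in the older Mathlib, since removed). -/
noncomputable def Matrix.PosSemidef.sqrt {m : ℕ} {M : Matrix (Fin m) (Fin m) ℝ}
    (hA : M.PosSemidef) : Matrix (Fin m) (Fin m) ℝ :=
  (hA.1.eigenvectorUnitary : Matrix (Fin m) (Fin m) ℝ) *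
    diagonal ((↑) ∘ (Real.sqrt ·) ∘ hA.1.eigenvalues) *
    (star (hA.1.eigenvectorUnitary : Matrix (Fin m) (Fin m) ℝ))

/-! Writing `S = M^{1/2}`, the identity `AᵀMA = (SA)ᵀ(SA)` gives `Null(AᵀMA) = Null(SA)`, and
`S` is invertible when `M` is. Since `A A† A = A`, the solution sets of `A x = A A† b` and of
`S A x = S A A† b` are cosets of `Null(A)` and `Null(SA)` through the common point `A† b`, and
every `A x` is of the form `A A† b`; so the solution sets agree for all `b` iff the null spaces do. -/

section GeneralizedInverse

variable {R k m n : Type*} [CommRing R] [Fintype m] [Fintype n]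

theorem Matrix.setOf_mulVec_eq_zero_eq_iff_forall_setOf_mulVec_eq
    (A : Matrix m n R) (Ad : Matrix n m R) (hAd : A * Ad * A = A) (S : Matrix k m R) :
    {x | S *ᵥ (A *ᵥ x) = 0} = {x | A *ᵥ x = 0} ↔
      ∀ b : m → R, {x | A *ᵥ x = A *ᵥ (Ad *ᵥ b)} =
        {x | S *ᵥ (A *ᵥ x) = S *ᵥ (A *ᵥ (Ad *ᵥ b))} := by
  constructor
  · intro hnull b
    ext x
    refine ⟨fun hx => by rw [Set.mem_ofPred_eq, hx], fun hx => ?_⟩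
    have hdiff : x - Ad *ᵥ b ∈ {x | S *ᵥ (A *ᵥ x) = 0} := by
      simp only [Set.mem_ofPred_eq, mulVec_sub]
      exact sub_eq_zero.mpr hx
    rw [hnull, Set.mem_ofPred_eq, mulVec_sub] at hdiff
    exact sub_eq_zero.mp hdiff
  · intro hsol
    ext x
    have hproj : A *ᵥ (Ad *ᵥ (A *ᵥ x)) = A *ᵥ x := by rw [mulVec_mulVec, mulVec_mulVec, hAd]
    have hzero := Set.ext_iff.mp (hsol (A *ᵥ x)) 0
    simp only [Set.mem_ofPred_eq, mulVec_zero, hproj] at hzero ⊢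
    exact ⟨fun hx => (hzero.mpr hx.symm).symm, fun hx => by rw [hx, mulVec_zero]⟩

end GeneralizedInverse

namespace Matrix.PosSemidef

variable {m n : ℕ} {M : Matrix (Fin m) (Fin m) ℝ} (hM : M.PosSemidef)

theorem transpose_sqrt : hM.sqrtᵀ = hM.sqrt := by
  rw [sqrt, transpose_mul, transpose_mul, diagonal_transpose, star_eq_conjTranspose,
    conjTranspose_eq_transpose_of_trivial, transpose_transpose, Matrix.mul_assoc]

theorem sqrt_mul_sqrt : hM.sqrt * hM.sqrt = M := by
  unfold sqrt
  have hU : star (hM.1.eigenvectorUnitary : Matrix (Fin m) (Fin m) ℝ) *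
      (hM.1.eigenvectorUnitary : Matrix (Fin m) (Fin m) ℝ) = 1 := Unitary.coe_star_mul_self _
  have hD : diagonal ((↑) ∘ (Real.sqrt ·) ∘ hM.1.eigenvalues) *
      diagonal ((↑) ∘ (Real.sqrt ·) ∘ hM.1.eigenvalues) =
      diagonal ((↑) ∘ hM.1.eigenvalues : Fin m → ℝ) := by
    rw [diagonal_mul_diagonal]
    congr 1
    funext i
    simp [Real.mul_self_sqrt (hM.eigenvalues_nonneg i)]
  conv_rhs => rw [hM.1.spectral_theorem, Unitary.conjStarAlgAut_apply]
  simp only [Matrix.mul_assoc]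
  rw [← Matrix.mul_assoc (star _) _, hU, Matrix.one_mul, ← Matrix.mul_assoc (diagonal _), hD]
  rfl

theorem transpose_mul_mul_mulVec_eq_zero_iff (A : Matrix (Fin m) (Fin n) ℝ) (x : Fin n → ℝ) :
    (Aᵀ * M * A) *ᵥ x = 0 ↔ hM.sqrt *ᵥ (A *ᵥ x) = 0 := by
  have hfactor : Aᵀ * M * A = (hM.sqrt * A)ᴴ * (hM.sqrt * A) := by
    rw [conjTranspose_eq_transpose_of_trivial, transpose_mul, hM.transpose_sqrt]
    simp only [Matrix.mul_assoc]
    rw [← Matrix.mul_assoc hM.sqrt, hM.sqrt_mul_sqrt]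
  rw [hfactor, conjTranspose_mul_self_mulVec_eq_zero, mulVec_mulVec]

theorem sqrt_mulVec_eq_zero_iff_of_posDef (hMd : M.PosDef) (v : Fin m → ℝ) :
    hM.sqrt *ᵥ v = 0 ↔ v = 0 := by
  refine ⟨fun hv => mulVec_injective_of_isUnit hMd.isUnit ?_, fun hv => by rw [hv, mulVec_zero]⟩
  rw [← hM.sqrt_mul_sqrt, ← mulVec_mulVec, hv, mulVec_zero, mulVec_zero]

end Matrix.PosSemidef

/-- If `M` is PSD then: (a) `M` positive definite implies `Null(AᵀMA) = Null(A)`; and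
(b) `Null(AᵀMA) = Null(A)` iff for every `b`, `{x : Ax = AA†b} = {x : M^{1/2}Ax = M^{1/2}AA†b}`. -/
theorem null_AtMA_eq_null_iff {m n : ℕ} (A : Matrix (Fin m) (Fin n) ℝ)
    (M : Matrix (Fin m) (Fin m) ℝ) (hM : M.PosSemidef)
    (Ad : Matrix (Fin n) (Fin m) ℝ) (hAd : IsMoorePenrose A Ad) :
    (M.PosDef →
      {x : Fin n → ℝ | (Aᵀ * M * A).mulVec x = 0} = {x : Fin n → ℝ | A.mulVec x = 0}) ∧
    ({x : Fin n → ℝ | (Aᵀ * M * A).mulVec x = 0} = {x : Fin n → ℝ | A.mulVec x = 0} ↔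
      ∀ b : Fin m → ℝ,
        {x : Fin n → ℝ | A.mulVec x = A.mulVec (Ad.mulVec b)} =
          {x : Fin n → ℝ | hM.sqrt.mulVec (A.mulVec x) =
            hM.sqrt.mulVec (A.mulVec (Ad.mulVec b))}) := by
  have hnull : {x : Fin n → ℝ | (Aᵀ * M * A) *ᵥ x = 0} = {x | hM.sqrt *ᵥ (A *ᵥ x) = 0} :=
    Set.ext fun x => hM.transpose_mul_mul_mulVec_eq_zero_iff A x
  rw [hnull]
  refine ⟨fun hMd => ?_, setOf_mulVec_eq_zero_eq_iff_forall_setOf_mulVec_eq A Ad hAd.1 hM.sqrt⟩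
  exact Set.ext fun x => hM.sqrt_mulVec_eq_zero_iff_of_posDef hMd (A *ᵥ x)
end

section
/- Let A ∈ ℝ^{m×n}, S ∈ ℝ^{m×ℓ}, and let w ∈ Range(A) with S^⊤w ≠ 0 and A^⊤SS^⊤w ≠ 0. Write Λ = λ_min(A^⊤SS^⊤A/‖A^⊤S‖²), the smallest nonzero eigenvalue of A^⊤SS^⊤A divided by ‖A^⊤S‖_2². Then the adaptive step-size L = ‖S^⊤w‖²/‖A^⊤SS^⊤w‖² satisfies L ≤ 1/(Λ·‖A^⊤S‖_2²). -/
/-!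
Write `w = A u` and `B = AᵀS`. Then `Sᵀw = Bᵀu` and `AᵀSSᵀw = M u` with `M = BBᵀ`, so the
step-size is `⟨u, M u⟩ / ‖M u‖²`. The smallest nonzero eigenvalue of `M / ‖B‖²` is `Λ`, hence that
of `M` is `Λ ‖B‖²`. For a positive semidefinite `M` whose nonzero eigenvalues are at least
`c > 0`, the function `x ↦ x² - c x` is nonnegative on the spectrum, so `M² - c M ⪰ 0`, i.e.
`c ⟨u, M u⟩ ≤ ‖M u‖²`.
-/

open Matrix
open scoped Matrix.Norms.L2Operator MatrixOrder

theorem spectrum.isLeast_nonzero_of_smul {𝕜 A : Type*} [Field 𝕜] [LinearOrder 𝕜]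
    [IsStrictOrderedRing 𝕜] [Ring A] [Algebra 𝕜 A] {a : A} {r : 𝕜} (hr : 0 < r) {Λ : 𝕜}
    (h : IsLeast {μ | μ ≠ 0 ∧ μ ∈ spectrum 𝕜 (r • a)} Λ) :
    IsLeast {μ | μ ≠ 0 ∧ μ ∈ spectrum 𝕜 a} (Λ / r) := by
  have hmem (s : 𝕜) : r * s ∈ spectrum 𝕜 (r • a) ↔ s ∈ spectrum 𝕜 a :=
    spectrum.smul_mem_smul_iff (r := Units.mk0 r hr.ne')
  obtain ⟨hΛ0, hΛ⟩ := h.1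
  refine ⟨⟨div_ne_zero hΛ0 hr.ne', (hmem _).1 ?_⟩, fun μ ⟨hμ0, hμ⟩ => ?_⟩
  · rwa [mul_div_cancel₀ _ hr.ne']
  · rw [div_le_iff₀ hr, mul_comm]
    exact h.2 ⟨mul_ne_zero hr.ne' hμ0, (hmem μ).2 hμ⟩

namespace Matrix

variable {n : Type*} [Fintype n]

theorem dotProduct_mul_transpose_mulVec {m R : Type*} [Fintype m] [CommSemiring R]
    (B : Matrix n m R) (u : n → R) : u ⬝ᵥ (B * Bᵀ) *ᵥ u = Bᵀ *ᵥ u ⬝ᵥ Bᵀ *ᵥ u := by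
  rw [← mulVec_mulVec, dotProduct_mulVec, ← mulVec_transpose]

variable [DecidableEq n]

theorem mem_spectrum_iff_exists_mulVec_eq_smul {K : Type*} [Field K] {M : Matrix n n K}
    {μ : K} : μ ∈ spectrum K M ↔ ∃ v ≠ 0, M *ᵥ v = μ • v := by
  rw [← spectrum_toLin', ← Module.End.hasEigenvalue_iff_mem_spectrum]
  constructor
  · intro h
    obtain ⟨v, hv, hv0⟩ := h.exists_hasEigenvector
    exact ⟨v, hv0, by simpa using Module.End.mem_eigenspace_iff.1 hv⟩
  · rintro ⟨v, hv0, hv⟩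
    exact Module.End.hasEigenvalue_of_hasEigenvector
      ⟨Module.End.mem_eigenspace_iff.2 (by simpa using hv), hv0⟩

theorem PosSemidef.mul_dotProduct_mulVec_le {M : Matrix n n ℝ} (hM : M.PosSemidef) {c : ℝ}
    (hc : ∀ μ ∈ spectrum ℝ M, μ ≠ 0 → c ≤ μ) (u : n → ℝ) :
    c * (u ⬝ᵥ M *ᵥ u) ≤ M *ᵥ u ⬝ᵥ M *ᵥ u := by
  have : IsSelfAdjoint M := hM.1
  have hsq : 0 ≤ M * M - c • M := by
    have := cfc_nonneg (a := M) (fun x hx => show 0 ≤ x * x - c * x from ?_)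
    · rwa [cfc_sub _ _ M, cfc_mul _ _ M, cfc_const_mul c (fun x => x) M, cfc_id' ℝ M] at this
    rcases eq_or_ne x 0 with rfl | hx0
    · simp
    · nlinarith [hc x hx hx0, spectrum_nonneg_of_nonneg hM.nonneg hx]
  have hMt : Mᵀ = M := by simpa using hM.1.eq
  have := (nonneg_iff_posSemidef.1 hsq).dotProduct_mulVec_nonneg u
  rw [sub_mulVec, dotProduct_sub, ← mulVec_mulVec, dotProduct_mulVec _ M, ← mulVec_transpose,
    hMt, smul_mulVec, dotProduct_smul, smul_eq_mul] at this
  simpa [sub_nonneg] using this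

theorem PosSemidef.dotProduct_mulVec_div_le {M : Matrix n n ℝ} (hM : M.PosSemidef) {c : ℝ}
    (hc : IsLeast {μ | μ ≠ 0 ∧ μ ∈ spectrum ℝ M} c) (u : n → ℝ) :
    (u ⬝ᵥ M *ᵥ u) / (M *ᵥ u ⬝ᵥ M *ᵥ u) ≤ 1 / c := by
  obtain ⟨hc0, hcM⟩ := hc.1
  have hc_pos : 0 < c := (spectrum_nonneg_of_nonneg hM.nonneg hcM).lt_of_ne' hc0
  have key := hM.mul_dotProduct_mulVec_le (fun μ hμ hμ0 => hc.2 ⟨hμ0, hμ⟩) u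
  refine div_le_of_le_mul₀ (by simpa using dotProduct_star_self_nonneg (M *ᵥ u))
    (one_div_nonneg.2 hc_pos.le) ?_
  rwa [one_div_mul_eq_div, le_div_iff₀' hc_pos]

end Matrix

theorem adaptive_stepsize_upper_bound_general {m n ℓ : ℕ} (A : Matrix (Fin m) (Fin n) ℝ)
    (S : Matrix (Fin m) (Fin ℓ) ℝ) (w : Fin m → ℝ)
    (hw : w ∈ Set.range A.mulVec)
    (Λ : ℝ)
    (hΛ : IsLeast {μ : ℝ | μ ≠ 0 ∧ ∃ v : Fin n → ℝ, v ≠ 0 ∧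
      ((1 / ‖Aᵀ * S‖ ^ 2) • (Aᵀ * S * Sᵀ * A)).mulVec v = μ • v} Λ) :
    (Sᵀ.mulVec w ⬝ᵥ Sᵀ.mulVec w) /
        ((Aᵀ * S * Sᵀ).mulVec w ⬝ᵥ (Aᵀ * S * Sᵀ).mulVec w) ≤
      1 / (Λ * ‖Aᵀ * S‖ ^ 2) := by
  obtain ⟨u, rfl⟩ := hw
  have hnorm : 0 < ‖Aᵀ * S‖ ^ 2 := by
    refine pow_pos (norm_pos_iff.2 fun h0 => ?_) 2
    obtain ⟨hΛ0, v, hv0, hv⟩ := hΛ.1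
    simp [h0, eq_comm (a := (0 : Fin n → ℝ)), hΛ0, hv0] at hv
  have hM : Aᵀ * S * Sᵀ * A = Aᵀ * S * (Aᵀ * S)ᵀ := by simp [transpose_mul, Matrix.mul_assoc]
  simp only [← mem_spectrum_iff_exists_mulVec_eq_smul, hM] at hΛ
  have key := (posSemidef_self_mul_conjTranspose (Aᵀ * S)).dotProduct_mulVec_div_le
    (spectrum.isLeast_nonzero_of_smul (one_div_pos.2 hnorm) hΛ) u
  have hnum : Sᵀ *ᵥ (A *ᵥ u) = (Aᵀ * S)ᵀ *ᵥ u := by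
    rw [mulVec_mulVec, transpose_mul, transpose_transpose]
  have hden : (Aᵀ * S * Sᵀ) *ᵥ (A *ᵥ u) = (Aᵀ * S * (Aᵀ * S)ᵀ) *ᵥ u := by
    rw [mulVec_mulVec, hM]
  rw [hnum, hden, ← dotProduct_mul_transpose_mulVec]
  simpa [div_div_eq_mul_div] using key

/-- For `w ∈ Range(A)` with `Sᵀw ≠ 0` and `AᵀSSᵀw ≠ 0`, the adaptive step-size
`L = ‖Sᵀw‖²/‖AᵀSSᵀw‖²` satisfies `L ≤ 1/(Λ ‖AᵀS‖₂²)`, where `Λ` is the smallest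
nonzero eigenvalue of `AᵀSSᵀA/‖AᵀS‖₂²`. -/
theorem adaptive_stepsize_upper_bound {m n ℓ : ℕ} (A : Matrix (Fin m) (Fin n) ℝ)
    (S : Matrix (Fin m) (Fin ℓ) ℝ) (w : Fin m → ℝ)
    (hw : w ∈ Set.range A.mulVec)
    (h1 : Sᵀ.mulVec w ≠ 0) (h2 : (Aᵀ * S * Sᵀ).mulVec w ≠ 0)
    (Λ : ℝ)
    (hΛ : IsLeast {μ : ℝ | μ ≠ 0 ∧ ∃ v : Fin n → ℝ, v ≠ 0 ∧
      ((1 / ‖Aᵀ * S‖ ^ 2) • (Aᵀ * S * Sᵀ * A)).mulVec v = μ • v} Λ) :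
    (Sᵀ.mulVec w ⬝ᵥ Sᵀ.mulVec w) /
        ((Aᵀ * S * Sᵀ).mulVec w ⬝ᵥ (Aᵀ * S * Sᵀ).mulVec w) ≤
      1 / (Λ * ‖Aᵀ * S‖ ^ 2) :=
  adaptive_stepsize_upper_bound_general A S w hw Λ hΛ
end

section
/- Let z, c ∈ ℝ^m with A^⊤c = 0, let T ∈ ℝ^{n×s} with T^⊤A^⊤z ≠ 0, let η ∈ (0,2), and set L̄ = ‖T^⊤A^⊤z‖²/‖AT T^⊤A^⊤z‖² and z⁺ = z − (2−η)·L̄·A T T^⊤ A^⊤ z. Then ‖z⁺ − c‖² = ‖z − c‖² − η(2−η)·L̄·‖T^⊤A^⊤z‖², and in particular ‖z⁺ − c‖² ≤ ‖z − c‖² − η(2−η)·‖T^⊤A^⊤z‖²/‖AT‖_2². -/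
/-!
With `B = A T`, the step direction is `p = B Bᵀ z` and `w = Bᵀ z`. Since `Bᵀ c = 0`,
`⟪p, z - c⟫ = ⟪w, Bᵀ (z - c)⟫ = ‖w‖²`, and the step size is chosen so that `L ‖p‖² = ‖w‖²`;
expanding `‖(z - c) - (2 - η) L p‖²` gives the identity. The bound follows from
`‖p‖ ≤ ‖B‖₂ ‖w‖`, which makes `L ≥ 1 / ‖B‖₂²`.
-/

open Matrix
open scoped Matrix.Norms.L2Operator

section DotProduct

variable {R : Type*} [CommRing R] {m n : Type*} [Fintype m] [Fintype n]

theorem sub_smul_dotProduct_sub_smul (e p : m → R) (t : R) :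
    (e - t • p) ⬝ᵥ (e - t • p) = e ⬝ᵥ e - 2 * t * (p ⬝ᵥ e) + t ^ 2 * (p ⬝ᵥ p) := by
  simp only [dotProduct_sub, sub_dotProduct, dotProduct_smul, smul_dotProduct, smul_eq_mul,
    dotProduct_comm e p]
  ring

theorem Matrix.mulVec_transpose_mulVec_dotProduct_sub (B : Matrix m n R) (z : m → R)
    {c : m → R} (hc : Bᵀ *ᵥ c = 0) : B *ᵥ (Bᵀ *ᵥ z) ⬝ᵥ (z - c) = Bᵀ *ᵥ z ⬝ᵥ Bᵀ *ᵥ z := by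
  rw [dotProduct_comm, ← dotProduct_transpose_mulVec, mulVec_sub, hc, sub_zero]

end DotProduct

section Real

variable {m n : Type*} [Fintype m] [Fintype n]

theorem dotProduct_self_nonneg (v : n → ℝ) : 0 ≤ v ⬝ᵥ v := by
  simpa using dotProduct_self_star_nonneg v

theorem dotProduct_self_eq_norm_sq (v : n → ℝ) :
    v ⬝ᵥ v = ‖(EuclideanSpace.equiv n ℝ).symm v‖ ^ 2 := by
  rw [← real_inner_self_eq_norm_sq]
  rfl

theorem Matrix.mulVec_dotProduct_self_le [DecidableEq n] (B : Matrix m n ℝ) (v : n → ℝ) :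
    B *ᵥ v ⬝ᵥ B *ᵥ v ≤ ‖B‖ ^ 2 * (v ⬝ᵥ v) := by
  rw [dotProduct_self_eq_norm_sq, dotProduct_self_eq_norm_sq, ← mul_pow]
  gcongr
  exact l2_opNorm_mulVec B _

end Real

theorem div_le_div_mul_self_of_le_mul {a b k : ℝ} (ha : 0 ≤ a) (hb : 0 ≤ b) (hbk : b ≤ k * a)
    (hab : b = 0 → a = 0) : a / k ≤ a / b * a := by
  rcases hb.eq_or_lt with rfl | hb
  · simp [hab rfl]
  have hk : 0 < k := pos_of_mul_pos_left (hb.trans_le hbk) ha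
  rw [div_mul_eq_mul_div, div_le_div_iff₀ hk hb]
  nlinarith

theorem z_update_decrease_general {m n s : ℕ} (A : Matrix (Fin m) (Fin n) ℝ)
    (z c : Fin m → ℝ) (hc : Aᵀ.mulVec c = 0)
    (T : Matrix (Fin n) (Fin s) ℝ)
    (η : ℝ) (hη : η ∈ Set.Ioo (0 : ℝ) 2)
    (w : Fin s → ℝ) (hwdef : w = Tᵀ.mulVec (Aᵀ.mulVec z))
    (p : Fin m → ℝ) (hpdef : p = A.mulVec (T.mulVec w))
    (L : ℝ) (hL : L = (w ⬝ᵥ w) / (p ⬝ᵥ p))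
    (z' : Fin m → ℝ) (hz' : z' = z - ((2 - η) * L) • p) :
    ((z' - c) ⬝ᵥ (z' - c) = (z - c) ⬝ᵥ (z - c) - η * (2 - η) * L * (w ⬝ᵥ w)) ∧
    ((z' - c) ⬝ᵥ (z' - c) ≤ (z - c) ⬝ᵥ (z - c) - η * (2 - η) * (w ⬝ᵥ w) / ‖A * T‖ ^ 2) := by
  have hw : w = (A * T)ᵀ *ᵥ z := by rw [hwdef, transpose_mul, mulVec_mulVec]
  have hp : p = (A * T) *ᵥ w := by rw [hpdef, mulVec_mulVec]
  have hpe : p ⬝ᵥ (z - c) = w ⬝ᵥ w := by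
    rw [hp, hw]
    refine mulVec_transpose_mulVec_dotProduct_sub _ z ?_
    rw [transpose_mul, ← mulVec_mulVec, hc, mulVec_zero]
  have hp0 : p ⬝ᵥ p = 0 → w ⬝ᵥ w = 0 := fun h => by
    rw [← hpe, dotProduct_self_eq_zero.1 h, zero_dotProduct]
  have hLp : L * (p ⬝ᵥ p) = w ⬝ᵥ w := hL ▸ div_mul_cancel_of_imp hp0
  have hstep : (z' - c) ⬝ᵥ (z' - c) = (z - c) ⬝ᵥ (z - c) - η * (2 - η) * L * (w ⬝ᵥ w) := by
    rw [hz', sub_right_comm, sub_smul_dotProduct_sub_smul, hpe]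
    linear_combination (2 - η) ^ 2 * L * hLp
  have hL_lb : w ⬝ᵥ w / ‖A * T‖ ^ 2 ≤ L * (w ⬝ᵥ w) := hL ▸
    div_le_div_mul_self_of_le_mul (dotProduct_self_nonneg w) (dotProduct_self_nonneg p)
      (hp ▸ (A * T).mulVec_dotProduct_self_le w) hp0
  have hη' : 0 ≤ η * (2 - η) := mul_nonneg hη.1.le (by linarith [hη.2])
  refine ⟨hstep, hstep ▸ ?_⟩
  have := mul_le_mul_of_nonneg_left hL_lb hη'
  rw [mul_div_assoc]
  linarith

/-- One adaptive step of the `z`-update: exact error identity and the resulting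
decrease bound in terms of the spectral norm `‖AT‖₂`. -/
theorem z_update_decrease {m n s : ℕ} (A : Matrix (Fin m) (Fin n) ℝ)
    (z c : Fin m → ℝ) (hc : Aᵀ.mulVec c = 0)
    (T : Matrix (Fin n) (Fin s) ℝ)
    (η : ℝ) (hη : η ∈ Set.Ioo (0 : ℝ) 2)
    (w : Fin s → ℝ) (hwdef : w = Tᵀ.mulVec (Aᵀ.mulVec z)) (hw : w ≠ 0)
    (p : Fin m → ℝ) (hpdef : p = A.mulVec (T.mulVec w))
    (L : ℝ) (hL : L = (w ⬝ᵥ w) / (p ⬝ᵥ p))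
    (z' : Fin m → ℝ) (hz' : z' = z - ((2 - η) * L) • p) :
    ((z' - c) ⬝ᵥ (z' - c) = (z - c) ⬝ᵥ (z - c) - η * (2 - η) * L * (w ⬝ᵥ w)) ∧
    ((z' - c) ⬝ᵥ (z' - c) ≤ (z - c) ⬝ᵥ (z - c) - η * (2 - η) * (w ⬝ᵥ w) / ‖A * T‖ ^ 2) :=
  z_update_decrease_general A z c hc T η hη w hwdef p hpdef L hL z' hz'
end

section
/- For any ρ_z, ρ_x ∈ (0,1) and any nonnegative integer k, letting ρ = max{ρ_z, ρ_x}, it holds that Σ_{i=0}^{k} ρ_z^{k+1−i} ρ_x^{i} ≤ ρ^{k+1} / max{|1 − ρ_x/ρ_z|, 1/(k+1)}. -/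
/-- Geometric cross-term estimate: for `ρ_z, ρ_x ∈ (0,1)` and `ρ = max{ρ_z, ρ_x}`,
`Σ_{i=0}^{k} ρ_z^{k+1−i} ρ_x^i ≤ ρ^{k+1} / max{|1 − ρ_x/ρ_z|, 1/(k+1)}`. -/
theorem geometric_cross_sum_bound (ρz ρx : ℝ)
    (hz : ρz ∈ Set.Ioo (0 : ℝ) 1) (hx : ρx ∈ Set.Ioo (0 : ℝ) 1) (k : ℕ) :
    ∑ i ∈ Finset.range (k + 1), ρz ^ (k + 1 - i) * ρx ^ i ≤
      (max ρz ρx) ^ (k + 1) / max |1 - ρx / ρz| (1 / (k + 1 : ℝ)) := by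
  obtain ⟨hz0, hz1⟩ := hz
  obtain ⟨hx0, hx1⟩ := hx
  set S := ∑ i ∈ Finset.range (k + 1), ρz ^ (k + 1 - i) * ρx ^ i with hS
  have hk1 : (0:ℝ) < (k:ℝ) + 1 := by positivity
  have hmaxpos : 0 < max |1 - ρx / ρz| (1 / (k + 1 : ℝ)) :=
    lt_max_of_lt_right (by positivity)
  have hρz : ρz ≤ max ρz ρx := le_max_left _ _
  have hρx : ρx ≤ max ρz ρx := le_max_right _ _
  have hρpos : (0:ℝ) < max ρz ρx := lt_max_of_lt_left hz0
  have hS0 : 0 ≤ S := by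
    apply Finset.sum_nonneg; intro i _; positivity
  rw [le_div_iff₀ hmaxpos, mul_max_of_nonneg _ _ hS0, max_le_iff]
  constructor
  · -- geometric bound
    have hS_eq : S = ρz * ∑ i ∈ Finset.range (k + 1), ρx ^ i * ρz ^ (k - i) := by
      rw [Finset.mul_sum]
      apply Finset.sum_congr rfl
      intro i hi
      have hik : i ≤ k := by
        have := Finset.mem_range.mp hi; omega
      have h : k + 1 - i = (k - i) + 1 := by omega
      rw [h]; ring
    have h1 : S * (ρx - ρz) = ρz * (ρx ^ (k + 1) - ρz ^ (k + 1)) := by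
      have hg := geom_sum₂_mul ρx ρz (k + 1)
      simp only [Nat.add_sub_cancel] at hg
      rw [hS_eq, mul_assoc, hg]
    have habs : |1 - ρx / ρz| = |ρz - ρx| / ρz := by
      have h : 1 - ρx / ρz = (ρz - ρx) / ρz := by field_simp
      rw [h, abs_div, abs_of_pos hz0]
    have h2 : S * |1 - ρx / ρz| = |ρz ^ (k + 1) - ρx ^ (k + 1)| := by
      rw [habs, ← mul_div_assoc]
      rw [show S * |ρz - ρx| = |S * (ρx - ρz)| by
        rw [abs_mul, abs_of_nonneg hS0, abs_sub_comm]]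
      rw [h1, abs_mul, abs_of_pos hz0, abs_sub_comm]
      field_simp
    rw [h2]
    have hz' : ρz ^ (k+1) ≤ (max ρz ρx) ^ (k+1) := pow_le_pow_left₀ hz0.le hρz _
    have hx' : ρx ^ (k+1) ≤ (max ρz ρx) ^ (k+1) := pow_le_pow_left₀ hx0.le hρx _
    have hzp : (0:ℝ) ≤ ρz ^ (k+1) := by positivity
    have hxp : (0:ℝ) ≤ ρx ^ (k+1) := by positivity
    rw [abs_sub_le_iff]
    constructor <;> linarith
  · -- counting bound
    have hterm : S ≤ (k + 1 : ℝ) * (max ρz ρx) ^ (k + 1) := by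
      have := Finset.sum_le_card_nsmul (Finset.range (k+1))
        (fun i => ρz ^ (k + 1 - i) * ρx ^ i) ((max ρz ρx) ^ (k + 1))
        (by
          intro i hi
          have hik : i ≤ k := by have := Finset.mem_range.mp hi; omega
          calc ρz ^ (k + 1 - i) * ρx ^ i
              ≤ (max ρz ρx) ^ (k + 1 - i) * (max ρz ρx) ^ i := by
                apply mul_le_mul (pow_le_pow_left₀ hz0.le hρz _)
                  (pow_le_pow_left₀ hx0.le hρx _) (by positivity) (by positivity)
            _ = (max ρz ρx) ^ (k + 1) := by
                rw [← pow_add]; congr 1; omega)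
      simpa [Finset.card_range, nsmul_eq_mul] using this
    rw [mul_one_div, div_le_iff₀ hk1]
    linarith
end
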